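/- arXiv:2011.03331 — 3 statements merged into one kernel-verified Lean document; each statement's English description precedes it below -/
import Mathlib

section
/- Suppose every single-edge subtrajectory T(i, i+1) of the trajectory T = v_0 … v_{k−1} is optimal. Then the greedy segmentation of T is a segmentation of T, and its number of segments is minimal among all segmentations of T. -/
open scoped ENNReal

variable {V : Type*}

/-- `f 0, f 1, …, f m` is a trajectory: every consecutive pair is joined by an edge
(of finite weight). -/
def IsTraj (w : V → V → ℝ≥0∞) (m : ℕ) (f : ℕ → V) : Prop :=
  ∀ i < m, w (f i) (f (i + 1)) < ⊤

/-- The cost of the trajectory `f 0, …, f m`. -/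
noncomputable def trajCost (w : V → V → ℝ≥0∞) (m : ℕ) (f : ℕ → V) : ℝ≥0∞ :=
  ∑ i ∈ Finset.range m, w (f i) (f (i + 1))

/-- The distance from `u` to `v`: the infimum of costs of all trajectories from `u` to `v`. -/
noncomputable def netDist (w : V → V → ℝ≥0∞) (u v : V) : ℝ≥0∞ :=
  ⨅ (m : ℕ) (f : ℕ → V) (_ : f 0 = u) (_ : f m = v) (_ : IsTraj w m f), trajCost w m f

/-- The subtrajectory `T(i, j)` of the trajectory given by `f` is optimal. -/
def SegOpt (w : V → V → ℝ≥0∞) (f : ℕ → V) (i j : ℕ) : Prop :=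
  trajCost w (j - i) (fun l => f (i + l)) = netDist w (f i) (f j)

/-- `b 0 = 0 < b 1 < … < b B = k - 1` is a segmentation of the trajectory
`f 0, …, f (k-1)` into `B` optimal segments. -/
def IsSeg (w : V → V → ℝ≥0∞) (f : ℕ → V) (k B : ℕ) (b : ℕ → ℕ) : Prop :=
  b 0 = 0 ∧ b B = k - 1 ∧ (∀ l < B, b l < b (l + 1)) ∧
    ∀ l < B, SegOpt w f (b l) (b (l + 1))

/-- `T(i, j)` is a minimal non-optimal subtrajectory (MNOST). -/
def IsMNOST (w : V → V → ℝ≥0∞) (f : ℕ → V) (i j : ℕ) : Prop :=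
  i < j ∧ ¬ SegOpt w f i j ∧ SegOpt w f (i + 1) j ∧ SegOpt w f i (j - 1)

/-- The next greedy index after `i`: the largest `x ≤ k - 1` such that the
subtrajectory `T(i, x)` is optimal (and `x > i`). -/
noncomputable def greedyNext (w : V → V → ℝ≥0∞) (f : ℕ → V) (k i : ℕ) : ℕ :=
  @Nat.findGreatest (fun x => i < x ∧ SegOpt w f i x) (Classical.decPred _) (k - 1)

/-- The indices of the greedy segmentation of the trajectory `f 0, …, f (k-1)`. -/
noncomputable def greedySeq (w : V → V → ℝ≥0∞) (f : ℕ → V) (k : ℕ) : ℕ → ℕ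
  | 0 => 0
  | l + 1 => greedyNext w f k (greedySeq w f k l)

/-!
A suffix of an optimal trajectory is optimal: the triangle inequality bounds the distance of the
whole by the cost of the dropped prefix plus the distance of the suffix, and the finite prefix
cost cancels. Hence, by induction on `l`, the `l`-th greedy index is never behind the `l`-th index
of any segmentation, so the greedy sequence reaches the endpoint within as many steps as any
segmentation has segments. The segmentation into single edges shows that it reaches it at all.
-/

section Distance

variable {w : V → V → ℝ≥0∞}

lemma netDist_le_trajCost {m : ℕ} {f : ℕ → V} (hf : IsTraj w m f) :
    netDist w (f 0) (f m) ≤ trajCost w m f :=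
  iInf_le_of_le m <| iInf_le_of_le f <| iInf_le_of_le rfl <| iInf_le_of_le rfl <| iInf_le _ hf

lemma netDist_le_trajCost_add_trajCost {m m' : ℕ} {f f' : ℕ → V} (hf : IsTraj w m f)
    (hf' : IsTraj w m' f') (hjoin : f m = f' 0) :
    netDist w (f 0) (f' m') ≤ trajCost w m f + trajCost w m' f' := by
  set g : ℕ → V := fun n => if n ≤ m then f n else f' (n - m)
  have hg_left : ∀ i ≤ m, g i = f i := fun i hi => if_pos hi
  have hg_right : ∀ i, g (m + i) = f' i := by
    intro i
    rcases i.eq_zero_or_pos with rfl | hi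
    · simpa [g] using hjoin
    · simp [g, show ¬ m + i ≤ m by omega]
  have hg : IsTraj w (m + m') g := by
    intro i hi
    rcases lt_or_ge i m with hlt | hge
    · rw [hg_left i hlt.le, hg_left (i + 1) hlt]
      exact hf i hlt
    · obtain ⟨j, rfl⟩ := Nat.exists_eq_add_of_le hge
      rw [hg_right, add_assoc, hg_right]
      exact hf' j (by omega)
  have hcost : trajCost w (m + m') g = trajCost w m f + trajCost w m' f' := by
    rw [trajCost, Finset.sum_range_add]
    congr 1
    · refine Finset.sum_congr rfl fun i hi => ?_
      rw [Finset.mem_range] at hi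
      rw [hg_left i hi.le, hg_left (i + 1) hi]
    · refine Finset.sum_congr rfl fun i _ => ?_
      rw [hg_right, add_assoc, hg_right]
  simpa only [hg_left 0 (Nat.zero_le m), hg_right, hcost] using netDist_le_trajCost hg

lemma netDist_triangle (u x v : V) : netDist w u v ≤ netDist w u x + netDist w x v := by
  simp only [netDist, ENNReal.iInf_add, ENNReal.add_iInf, le_iInf_iff]
  rintro m f rfl rfl hf m' f' rfl hjoin hf'
  exact netDist_le_trajCost_add_trajCost hf' hf hjoin

end Distance

section Optimality

variable {w : V → V → ℝ≥0∞} {f : ℕ → V}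

lemma trajCost_shift_eq_sum_Ico (i j : ℕ) :
    trajCost w (j - i) (fun l => f (i + l)) = ∑ l ∈ Finset.Ico i j, w (f l) (f (l + 1)) := by
  simp only [trajCost, Finset.sum_Ico_eq_sum_range, add_assoc]

lemma netDist_le_sum_Ico {i j : ℕ} (htraj : IsTraj w j f) (hij : i ≤ j) :
    netDist w (f i) (f j) ≤ ∑ l ∈ Finset.Ico i j, w (f l) (f (l + 1)) := by
  have hshift : IsTraj w (j - i) (fun l => f (i + l)) := fun l hl => by
    simpa only [add_assoc] using htraj (i + l) (by omega)
  rw [← trajCost_shift_eq_sum_Ico]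
  simpa [Nat.add_sub_cancel' hij] using netDist_le_trajCost hshift

lemma SegOpt.suffix {i i' j : ℕ} (htraj : IsTraj w j f) (hii' : i ≤ i') (hi'j : i' ≤ j)
    (hopt : SegOpt w f i j) : SegOpt w f i' j := by
  set prefixCost := ∑ l ∈ Finset.Ico i i', w (f l) (f (l + 1))
  set suffixCost := ∑ l ∈ Finset.Ico i' j, w (f l) (f (l + 1))
  have hprefix : prefixCost ≠ ⊤ :=
    (ENNReal.sum_lt_top.mpr fun l hl => htraj l ((Finset.mem_Ico.mp hl).2.trans_le hi'j)).ne
  rw [SegOpt, trajCost_shift_eq_sum_Ico, ← Finset.sum_Ico_consecutive _ hii' hi'j] at hopt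
  rw [SegOpt, trajCost_shift_eq_sum_Ico]
  refine le_antisymm ((ENNReal.add_le_add_iff_left hprefix).mp ?_) (netDist_le_sum_Ico htraj hi'j)
  calc prefixCost + suffixCost
      = netDist w (f i) (f j) := hopt
    _ ≤ netDist w (f i) (f i') + netDist w (f i') (f j) := netDist_triangle _ _ _
    _ ≤ prefixCost + netDist w (f i') (f j) := by
      gcongr
      exact netDist_le_sum_Ico (fun l hl => htraj l (by omega)) hii'

end Optimality

section Greedy

variable {w : V → V → ℝ≥0∞} {f : ℕ → V} {k : ℕ}

lemma greedyNext_le (i : ℕ) : greedyNext w f k i ≤ k - 1 :=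
  letI := Classical.decPred fun x => i < x ∧ SegOpt w f i x
  Nat.findGreatest_le _

lemma le_greedyNext {i j : ℕ} (hj : j ≤ k - 1) (hij : i < j) (hopt : SegOpt w f i j) :
    j ≤ greedyNext w f k i :=
  letI := Classical.decPred fun x => i < x ∧ SegOpt w f i x
  Nat.le_findGreatest hj ⟨hij, hopt⟩

lemma lt_greedyNext_and_segOpt {i : ℕ} (hi : i < k - 1) (hedge : SegOpt w f i (i + 1)) :
    i < greedyNext w f k i ∧ SegOpt w f i (greedyNext w f k i) :=
  letI := Classical.decPred fun x => i < x ∧ SegOpt w f i x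
  Nat.findGreatest_spec (P := fun x => i < x ∧ SegOpt w f i x) hi ⟨i.lt_succ_self, hedge⟩

lemma greedySeq_le (l : ℕ) : greedySeq w f k l ≤ k - 1 := by
  cases l with
  | zero => exact Nat.zero_le _
  | succ l => exact greedyNext_le _

lemma isSeg_greedySeq (hedges : ∀ i < k - 1, SegOpt w f i (i + 1)) {B : ℕ}
    (hB : greedySeq w f k B = k - 1) (hbefore : ∀ l < B, greedySeq w f k l ≠ k - 1) :
    IsSeg w f k B (greedySeq w f k) := by
  have hstep : ∀ l < B, greedySeq w f k l < greedySeq w f k (l + 1) ∧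
      SegOpt w f (greedySeq w f k l) (greedySeq w f k (l + 1)) := fun l hl =>
    have hlt := (greedySeq_le l).lt_of_ne (hbefore l hl)
    lt_greedyNext_and_segOpt hlt (hedges _ hlt)
  exact ⟨rfl, hB, fun l hl => (hstep l hl).1, fun l hl => (hstep l hl).2⟩

end Greedy

section Segmentation

variable {w : V → V → ℝ≥0∞} {f : ℕ → V} {k : ℕ}

lemma isSeg_edges (hedges : ∀ i < k - 1, SegOpt w f i (i + 1)) : IsSeg w f k (k - 1) id :=
  ⟨rfl, rfl, fun l _ => l.lt_succ_self, hedges⟩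

lemma IsSeg.le_last {B : ℕ} {b : ℕ → ℕ} (hseg : IsSeg w f k B b) {l : ℕ} (hl : l ≤ B) :
    b l ≤ k - 1 := by
  rw [← hseg.2.1]
  induction hl using Nat.decreasingInduction with
  | self => exact le_rfl
  | of_succ n hn ih => exact (hseg.2.2.1 n hn).le.trans ih

lemma IsSeg.exists_greedySeq_eq_of_le (htraj : IsTraj w (k - 1) f)
    (hedges : ∀ i < k - 1, SegOpt w f i (i + 1)) {B : ℕ} {b : ℕ → ℕ} (hseg : IsSeg w f k B b)
    {l : ℕ} (hl : l ≤ B) : (∃ n ≤ l, greedySeq w f k n = k - 1) ∨ b l ≤ greedySeq w f k l := by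
  induction l with
  | zero => exact .inr hseg.1.le
  | succ l ih =>
    rcases ih (by omega) with ⟨n, hn, hreach⟩ | hahead
    · exact .inl ⟨n, by omega, hreach⟩
    rcases (greedySeq_le (w := w) (f := f) l).eq_or_lt with hreach | hlt
    · exact .inl ⟨l, by omega, hreach⟩
    right
    have hnext := lt_greedyNext_and_segOpt hlt (hedges _ hlt)
    rcases le_or_gt (b (l + 1)) (greedySeq w f k l) with hbehind | hpast
    · exact hbehind.trans hnext.1.le
    · have hend := hseg.le_last hl
      refine le_greedyNext hend hpast ?_
      exact (hseg.2.2.2 l hl).suffix (fun i hi => htraj i (by omega)) hahead hpast.le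

lemma IsSeg.exists_greedySeq_eq (htraj : IsTraj w (k - 1) f)
    (hedges : ∀ i < k - 1, SegOpt w f i (i + 1)) {B : ℕ} {b : ℕ → ℕ} (hseg : IsSeg w f k B b) :
    ∃ n ≤ B, greedySeq w f k n = k - 1 := by
  refine (hseg.exists_greedySeq_eq_of_le htraj hedges le_rfl).elim id fun hahead => ?_
  exact ⟨B, le_rfl, (greedySeq_le B).antisymm (hseg.2.1 ▸ hahead)⟩

end Segmentation

theorem greedy_segmentation_is_minimal_general
    (w : V → V → ℝ≥0∞) (k : ℕ) (f : ℕ → V)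
    (htraj : IsTraj w (k - 1) f)
    (hedges : ∀ i < k - 1, SegOpt w f i (i + 1)) :
    ∃ B, IsSeg w f k B (greedySeq w f k) ∧
      ∀ B' (b' : ℕ → ℕ), IsSeg w f k B' b' → B ≤ B' := by
  have hreach : ∃ n, greedySeq w f k n = k - 1 :=
    let ⟨n, _, hn⟩ := (isSeg_edges hedges).exists_greedySeq_eq htraj hedges
    ⟨n, hn⟩
  refine ⟨Nat.find hreach, isSeg_greedySeq hedges (Nat.find_spec hreach)
    fun l hl => Nat.find_min hreach hl, fun B' b' hseg => ?_⟩
  obtain ⟨n, hn, hreach_n⟩ := hseg.exists_greedySeq_eq htraj hedges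
  exact (Nat.find_min' hreach hreach_n).trans hn

/-- If every single-edge subtrajectory of `T` is optimal, the greedy segmentation of `T`
is a segmentation of `T`, and its number of segments is minimal among all segmentations. -/
theorem greedy_segmentation_is_minimal [Fintype V]
    (w : V → V → ℝ≥0∞) (k : ℕ) (hk : 1 ≤ k) (f : ℕ → V)
    (htraj : IsTraj w (k - 1) f)
    (hedges : ∀ i < k - 1, SegOpt w f i (i + 1)) :
    ∃ B, IsSeg w f k B (greedySeq w f k) ∧
      ∀ B' (b' : ℕ → ℕ), IsSeg w f k B' b' → B ≤ B' :=
  greedy_segmentation_is_minimal_general w k f htraj hedges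
end

section
/- Every hitting set of the MNOST intervals induces a valid segmentation: suppose every single-edge subtrajectory of T = v_0 … v_{k−1} is optimal, and let S ⊆ {0, 1, …, k−1} be a set containing 0 and k−1 such that for every minimal non-optimal subtrajectory T(i, j) of T there exists b ∈ S with i < b < j. Then the increasing enumeration of S is a segmentation of T, i.e., the subtrajectory of T between any two consecutive elements of S is optimal. -/
open scoped ENNReal

variable {V : Type*}

/-- Every hitting set of the MNOST intervals induces a valid segmentation: the
subtrajectory of `T` between any two consecutive elements of `S` is optimal. -/
theorem hitting_set_induces_segmentation [Fintype V]
    (w : V → V → ℝ≥0∞) (k : ℕ) (hk : 1 ≤ k) (f : ℕ → V)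
    (htraj : IsTraj w (k - 1) f)
    (hedges : ∀ i < k - 1, SegOpt w f i (i + 1))
    (S : Finset ℕ) (hSsub : ∀ s ∈ S, s ≤ k - 1) (h0 : 0 ∈ S) (hlast : k - 1 ∈ S)
    (hhit : ∀ i j, j ≤ k - 1 → IsMNOST w f i j → ∃ s ∈ S, i < s ∧ s < j) :
    ∀ a ∈ S, ∀ c ∈ S, a < c → (∀ s ∈ S, ¬ (a < s ∧ s < c)) → SegOpt w f a c := by
  classical
  intro a ha c hc hac hcons
  by_contra hopt
  have hck : c ≤ k - 1 := hSsub c hc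
  have hQ : ∃ n, ∃ i j, a ≤ i ∧ j ≤ c ∧ i < j ∧ j - i = n ∧ ¬ SegOpt w f i j :=
    ⟨c - a, a, c, le_rfl, le_rfl, hac, rfl, hopt⟩
  obtain ⟨i, j, hai, hjc, hij, hlen, hns⟩ := Nat.find_spec hQ
  set n := Nat.find hQ with hn
  have hn2 : 2 ≤ n := by
    rcases Nat.lt_or_ge n 2 with h | h
    · exfalso
      have hji : j = i + 1 := by omega
      subst hji
      exact hns (hedges i (by omega))
    · exact h
  have h1 : SegOpt w f (i + 1) j := by
    by_contra hcon
    exact Nat.find_min hQ (m := n - 1) (by omega)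
      ⟨i + 1, j, by omega, hjc, by omega, by omega, hcon⟩
  have h2 : SegOpt w f i (j - 1) := by
    by_contra hcon
    exact Nat.find_min hQ (m := n - 1) (by omega)
      ⟨i, j - 1, hai, by omega, by omega, by omega, hcon⟩
  obtain ⟨s, hs, his, hsj⟩ := hhit i j (le_trans hjc hck) ⟨hij, hns, h1, h2⟩
  exact hcons s hs ⟨by omega, by omega⟩
end

section
/- Characterization of zero excess cost in the ACMP: let π be a trajectory from s to t, and for α in the standard simplex define δ(α) = max(0, (α-cost of π) − min over all paths π' from s to t of (α-cost of π')). Then the infimum of δ(α) over the standard simplex equals 0 if and only if there exists α in the standard simplex such that π is α-optimal, i.e., the α-cost of π is at most the α-cost of every trajectory from s to t. -/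
open scoped NNReal

variable {V : Type*}

/-- `f 0, f 1, …, f m` is a trajectory in the graph with edge relation `E`. -/
def IsTrajE (E : V → V → Prop) (m : ℕ) (f : ℕ → V) : Prop :=
  ∀ i < m, E (f i) (f (i + 1))

/-- The `α`-cost of the trajectory `f 0, …, f m`: `∑ j, α j` times the `j`-th
coordinate of its cost vector `∑_{i<m} c (f i) (f (i+1))`. -/
noncomputable def aCost {d : ℕ} (c : V → V → Fin d → ℝ≥0) (α : Fin d → ℝ)
    (m : ℕ) (f : ℕ → V) : ℝ :=
  ∑ j, α j * ∑ i ∈ Finset.range m, (c (f i) (f (i + 1)) j : ℝ)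

/-- The trajectory `f 0, …, f m` is `α`-optimal: it is a trajectory whose `α`-cost is at
most the `α`-cost of every trajectory with the same endpoints. -/
def AOpt {d : ℕ} (E : V → V → Prop) (c : V → V → Fin d → ℝ≥0) (α : Fin d → ℝ)
    (m : ℕ) (f : ℕ → V) : Prop :=
  IsTrajE E m f ∧ ∀ (m' : ℕ) (f' : ℕ → V), f' 0 = f 0 → f' m' = f m →
    IsTrajE E m' f' → aCost c α m f ≤ aCost c α m' f'

/-- The trajectory `f 0, …, f m` is preference-optimal: it is `α`-optimal for
some `α` in the standard simplex. -/
def PrefOpt {d : ℕ} (E : V → V → Prop) (c : V → V → Fin d → ℝ≥0)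
    (m : ℕ) (f : ℕ → V) : Prop :=
  ∃ α ∈ stdSimplex ℝ (Fin d), AOpt E c α m f

/-- `f 0, …, f m` is a path: a trajectory with no repeated vertices. -/
def IsPath (E : V → V → Prop) (m : ℕ) (f : ℕ → V) : Prop :=
  IsTrajE E m f ∧ ∀ a ≤ m, ∀ b ≤ m, f a = f b → a = b

/-- The minimum `α`-cost over all paths from `s` to `t`. -/
noncomputable def minPathCost {d : ℕ} (E : V → V → Prop) (c : V → V → Fin d → ℝ≥0)
    (α : Fin d → ℝ) (s t : V) : ℝ :=
  sInf {x | ∃ (m : ℕ) (f : ℕ → V), f 0 = s ∧ f m = t ∧ IsPath E m f ∧ x = aCost c α m f}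

/-- `δ(α)` of the additional cost minimization problem for the trajectory
`π 0, …, π m` from `s` to `t`. -/
noncomputable def acmpDelta {d : ℕ} (E : V → V → Prop) (c : V → V → Fin d → ℝ≥0)
    (s t : V) (m : ℕ) (π : ℕ → V) (α : Fin d → ℝ) : ℝ :=
  max 0 (aCost c α m π - minPathCost E c α s t)

/-!
Cutting loops out of a trajectory yields a path between the same endpoints whose cost vector is
no larger in any coordinate. Hence, for `α ≥ 0`, `π` is `α`-optimal as soon as it beats every
path, that is, exactly when `δ(α) = 0`. The minimal path cost is an infimum of linear functions
of `α`, hence upper semicontinuous; so `δ` is lower semicontinuous and attains its infimum on the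
compact simplex.
-/

open Finset

def walkWeight (w : V → V → ℝ) (m : ℕ) (f : ℕ → V) : ℝ :=
  ∑ i ∈ range m, w (f i) (f (i + 1))

theorem aCost_eq_walkWeight {d : ℕ} (c : V → V → Fin d → ℝ≥0) (α : Fin d → ℝ)
    (m : ℕ) (f : ℕ → V) :
    aCost c α m f = walkWeight (fun u v => ∑ j, α j * c u v j) m f := by
  simp only [aCost, walkWeight, mul_sum]
  exact sum_comm

section SkipLoop

def skipLoop (f : ℕ → V) (a b : ℕ) : ℕ → V :=
  fun i => if i < a then f i else f (b + (i - a))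

variable {f : ℕ → V} {a b : ℕ}

theorem skipLoop_of_lt {i : ℕ} (h : i < a) : skipLoop f a b i = f i := if_pos h

theorem skipLoop_add (i : ℕ) : skipLoop f a b (a + i) = f (b + i) := by
  simp [skipLoop]

theorem skipLoop_of_le (hfab : f a = f b) {i : ℕ} (h : i ≤ a) : skipLoop f a b i = f i := by
  rcases h.lt_or_eq with h | rfl
  · exact skipLoop_of_lt h
  · simpa using (skipLoop_add (f := f) (b := b) 0).trans hfab.symm

theorem isTrajE_skipLoop {E : V → V → Prop} {r : ℕ} (hf : IsTrajE E (b + r) f) (hab : a ≤ b)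
    (hfab : f a = f b) : IsTrajE E (a + r) (skipLoop f a b) := by
  intro i hi
  rcases lt_or_ge i a with h | h
  · rw [skipLoop_of_lt h, skipLoop_of_le hfab h]
    exact hf i (by omega)
  · obtain ⟨k, rfl⟩ := Nat.exists_eq_add_of_le h
    rw [skipLoop_add, add_assoc, skipLoop_add, ← add_assoc]
    exact hf (b + k) (by omega)

theorem walkWeight_skipLoop_le {w : V → V → ℝ} {r : ℕ} (hw : ∀ u v, 0 ≤ w u v) (hab : a ≤ b)
    (hfab : f a = f b) : walkWeight w (a + r) (skipLoop f a b) ≤ walkWeight w (b + r) f := by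
  simp only [walkWeight, sum_range_add, add_assoc, skipLoop_add]
  gcongr 1
  rw [sum_congr rfl fun i hi => by
    rw [skipLoop_of_lt (mem_range.1 hi), skipLoop_of_le hfab (mem_range.1 hi)]]
  exact sum_le_sum_of_subset_of_nonneg (range_subset_range.2 hab) fun _ _ _ => hw _ _

end SkipLoop

theorem exists_isPath_walkWeight_le {E : V → V → Prop} {m : ℕ} {f : ℕ → V}
    (hf : IsTrajE E m f) :
    ∃ (m' : ℕ) (g : ℕ → V), g 0 = f 0 ∧ g m' = f m ∧ IsPath E m' g ∧
      ∀ w : V → V → ℝ, (∀ u v, 0 ≤ w u v) → walkWeight w m' g ≤ walkWeight w m f := by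
  induction m using Nat.strong_induction_on generalizing f with
  | _ m ih =>
  by_cases hinj : ∀ a ≤ m, ∀ b ≤ m, f a = f b → a = b
  · exact ⟨m, f, rfl, rfl, ⟨hf, hinj⟩, fun _ _ => le_rfl⟩
  obtain ⟨a, b, hab, hbm, hfab⟩ : ∃ a b, a < b ∧ b ≤ m ∧ f a = f b := by
    push Not at hinj
    obtain ⟨a, ha, b, hb, hfab, hne⟩ := hinj
    rcases hne.lt_or_gt with h | h
    exacts [⟨a, b, h, hb, hfab⟩, ⟨b, a, h, ha, hfab.symm⟩]
  obtain ⟨r, rfl⟩ := Nat.exists_eq_add_of_le hbm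
  obtain ⟨m', g, hg0, hgm, hg, hgw⟩ := ih (a + r) (by omega) (isTrajE_skipLoop hf hab.le hfab)
  refine ⟨m', g, ?_, ?_, hg, fun w hw => (hgw w hw).trans (walkWeight_skipLoop_le hw hab.le hfab)⟩
  · rw [hg0, skipLoop_of_le hfab (Nat.zero_le a)]
  · rw [hgm, skipLoop_add]

theorem IsTrajE.exists_isPath {E : V → V → Prop} {m : ℕ} {f : ℕ → V} (hf : IsTrajE E m f) :
    ∃ (m' : ℕ) (g : ℕ → V), g 0 = f 0 ∧ g m' = f m ∧ IsPath E m' g :=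
  let ⟨m', g, hg0, hgm, hg, _⟩ := exists_isPath_walkWeight_le hf
  ⟨m', g, hg0, hgm, hg⟩

section Cost

variable {d : ℕ} {E : V → V → Prop} {c : V → V → Fin d → ℝ≥0} {α : Fin d → ℝ}

theorem aCost_nonneg (hα : 0 ≤ α) (m : ℕ) (f : ℕ → V) : 0 ≤ aCost c α m f :=
  sum_nonneg fun j _ => mul_nonneg (hα j) (sum_nonneg fun _ _ => NNReal.coe_nonneg _)

theorem continuous_aCost (c : V → V → Fin d → ℝ≥0) (m : ℕ) (f : ℕ → V) :
    Continuous fun α => aCost c α m f := by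
  unfold aCost
  fun_prop

theorem exists_isPath_aCost_le (hα : 0 ≤ α) {m : ℕ} {f : ℕ → V} (hf : IsTrajE E m f) :
    ∃ (m' : ℕ) (g : ℕ → V), g 0 = f 0 ∧ g m' = f m ∧ IsPath E m' g ∧
      aCost c α m' g ≤ aCost c α m f := by
  obtain ⟨m', g, hg0, hgm, hg, hgw⟩ := exists_isPath_walkWeight_le hf
  refine ⟨m', g, hg0, hgm, hg, ?_⟩
  simp only [aCost_eq_walkWeight]
  exact hgw _ fun u v => sum_nonneg fun j _ => mul_nonneg (hα j) (c u v j).2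

theorem aOpt_iff_forall_isPath (hα : 0 ≤ α) {m : ℕ} {π : ℕ → V} (hπ : IsTrajE E m π) :
    AOpt E c α m π ↔ ∀ (m' : ℕ) (g : ℕ → V), g 0 = π 0 → g m' = π m → IsPath E m' g →
      aCost c α m π ≤ aCost c α m' g := by
  refine ⟨fun h m' g h0 hm hg => h.2 m' g h0 hm hg.1, fun h => ⟨hπ, fun m' f h0 hm hf => ?_⟩⟩
  obtain ⟨m'', g, hg0, hgm, hg, hgf⟩ := exists_isPath_aCost_le (c := c) hα hf
  exact (h m'' g (hg0.trans h0) (hgm.trans hm) hg).trans hgf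

variable {s t : V}

theorem minPathCost_le (hα : 0 ≤ α) {m : ℕ} {g : ℕ → V} (h0 : g 0 = s) (hm : g m = t)
    (hg : IsPath E m g) : minPathCost E c α s t ≤ aCost c α m g :=
  csInf_le ⟨0, by rintro _ ⟨m, f, -, -, -, rfl⟩; exact aCost_nonneg hα m f⟩ ⟨m, g, h0, hm, hg, rfl⟩

theorem le_minPathCost_iff (hα : 0 ≤ α)
    (hst : ∃ (m : ℕ) (g : ℕ → V), g 0 = s ∧ g m = t ∧ IsPath E m g) {x : ℝ} :
    x ≤ minPathCost E c α s t ↔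
      ∀ (m : ℕ) (g : ℕ → V), g 0 = s → g m = t → IsPath E m g → x ≤ aCost c α m g := by
  refine ⟨fun h m g h0 hm hg => h.trans (minPathCost_le hα h0 hm hg), fun h => ?_⟩
  obtain ⟨m, g, h0, hm, hg⟩ := hst
  refine le_csInf ⟨_, m, g, h0, hm, hg, rfl⟩ ?_
  rintro _ ⟨m, g, h0, hm, hg, rfl⟩
  exact h m g h0 hm hg

theorem upperSemicontinuousOn_minPathCost
    (hst : ∃ (m : ℕ) (g : ℕ → V), g 0 = s ∧ g m = t ∧ IsPath E m g) :
    UpperSemicontinuousOn (fun α => minPathCost E c α s t) (Set.Ici 0) := by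
  intro α₀ _ y hy
  dsimp only [minPathCost] at hy
  obtain ⟨m, g, h0, hm, hg⟩ := hst
  obtain ⟨_, ⟨m, g, h0, hm, hg, rfl⟩, hlt⟩ :=
    exists_lt_of_csInf_lt (by exact ⟨_, m, g, h0, hm, hg, rfl⟩) hy
  filter_upwards [(continuous_aCost c m g).continuousWithinAt.eventually_lt
    continuousWithinAt_const hlt, self_mem_nhdsWithin] with α hαy hα
  exact (minPathCost_le hα h0 hm hg).trans_lt hαy

variable {m : ℕ} {π : ℕ → V}

theorem lowerSemicontinuousOn_acmpDelta
    (hst : ∃ (m : ℕ) (g : ℕ → V), g 0 = s ∧ g m = t ∧ IsPath E m g) :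
    LowerSemicontinuousOn (acmpDelta E c s t m π) (Set.Ici 0) := by
  have hneg := continuous_neg.comp_upperSemicontinuousOn_antitone
    (upperSemicontinuousOn_minPathCost (c := c) hst) fun _ _ => neg_le_neg
  have hsub := ((continuous_aCost c m π).lowerSemicontinuous.lowerSemicontinuousOn _).add hneg
  exact (continuous_const.max continuous_id).comp_lowerSemicontinuousOn hsub
    fun _ _ h => max_le_max le_rfl h

theorem acmpDelta_eq_zero_iff (hα : 0 ≤ α) (hπ0 : π 0 = s) (hπm : π m = t)
    (hπ : IsTrajE E m π) : acmpDelta E c s t m π α = 0 ↔ AOpt E c α m π := by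
  obtain ⟨m', g, hg0, hgm, hg⟩ := hπ.exists_isPath
  rw [acmpDelta, max_eq_left_iff, sub_nonpos,
    le_minPathCost_iff hα ⟨m', g, hg0.trans hπ0, hgm.trans hπm, hg⟩,
    aOpt_iff_forall_isPath hα hπ, hπ0, hπm]

end Cost

theorem LowerSemicontinuousOn.sInf_image_eq_zero_iff {X : Type*} [TopologicalSpace X]
    {f : X → ℝ} {K : Set X} (hf : LowerSemicontinuousOn f K) (hK : IsCompact K)
    (hne : K.Nonempty) (hf0 : ∀ x ∈ K, 0 ≤ f x) :
    sInf (f '' K) = 0 ↔ ∃ x ∈ K, f x = 0 := by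
  obtain ⟨a, ha, hmin⟩ := hf.exists_isMinOn hne hK
  have hleast : IsLeast (f '' K) (f a) := ⟨⟨a, ha, rfl⟩, by rintro _ ⟨x, hx, rfl⟩; exact hmin hx⟩
  rw [hleast.csInf_eq]
  refine ⟨fun h => ⟨a, ha, h⟩, fun ⟨x, hx, hx0⟩ => ?_⟩
  exact le_antisymm (hx0 ▸ hmin hx) (hf0 a ha)

theorem acmp_inf_zero_iff_alpha_optimal_general
    (E : V → V → Prop) (d : ℕ) (hd : 1 ≤ d) (c : V → V → Fin d → ℝ≥0)
    (s t : V) (m : ℕ) (π : ℕ → V)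
    (hπ0 : π 0 = s) (hπm : π m = t) (hπ : IsTrajE E m π) :
    sInf {x | ∃ α ∈ stdSimplex ℝ (Fin d), x = acmpDelta E c s t m π α} = 0 ↔
      ∃ α ∈ stdSimplex ℝ (Fin d), AOpt E c α m π := by
  obtain ⟨m', g, hg0, hgm, hg⟩ := hπ.exists_isPath
  have hst : ∃ (m' : ℕ) (g : ℕ → V), g 0 = s ∧ g m' = t ∧ IsPath E m' g :=
    ⟨m', g, hg0.trans hπ0, hgm.trans hπm, hg⟩
  have hδ : LowerSemicontinuousOn (acmpDelta E c s t m π) (stdSimplex ℝ (Fin d)) :=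
    (lowerSemicontinuousOn_acmpDelta hst).mono fun α hα => hα.1
  have himage : {x | ∃ α ∈ stdSimplex ℝ (Fin d), x = acmpDelta E c s t m π α} =
      acmpDelta E c s t m π '' stdSimplex ℝ (Fin d) := by
    ext
    simp [eq_comm]
  rw [himage, hδ.sInf_image_eq_zero_iff (isCompact_stdSimplex ℝ (Fin d))
    ⟨_, single_mem_stdSimplex ℝ (⟨0, hd⟩ : Fin d)⟩ fun α _ => le_max_left _ _]
  exact exists_congr fun α => and_congr_right fun hα => acmpDelta_eq_zero_iff hα.1 hπ0 hπm hπ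

/-- The infimum of `δ(α)` over the standard simplex equals `0` iff there exists `α`
in the standard simplex such that `π` is `α`-optimal. -/
theorem acmp_inf_zero_iff_alpha_optimal [Fintype V]
    (E : V → V → Prop) (d : ℕ) (hd : 1 ≤ d) (c : V → V → Fin d → ℝ≥0)
    (s t : V) (m : ℕ) (π : ℕ → V)
    (hπ0 : π 0 = s) (hπm : π m = t) (hπ : IsTrajE E m π)
    (hpath : ∃ (m' : ℕ) (f : ℕ → V), f 0 = s ∧ f m' = t ∧ IsPath E m' f) :
    sInf {x | ∃ α ∈ stdSimplex ℝ (Fin d), x = acmpDelta E c s t m π α} = 0 ↔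
      ∃ α ∈ stdSimplex ℝ (Fin d), AOpt E c α m π :=
  acmp_inf_zero_iff_alpha_optimal_general E d hd c s t m π hπ0 hπm hπ
end
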